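/- arXiv:2102.13457 — 5 statements merged into one kernel-verified Lean document; each statement's English description precedes it below -/
import Mathlib

section
/- In the best-shot public goods game on a finite graph (each vertex chooses P or F; a vertex playing F gets utility 1 if some neighbor plays P and 0 otherwise; a vertex playing P gets utility 1-c, where 0 < c < 1), a pure strategy profile is a Nash equilibrium if and only if the set of vertices playing P is a maximal independent set of the graph. -/
/-- Utility in the best-shot public goods game: `true` means playing P. -/
def bspgUtil {V : Type*} [Fintype V] (G : SimpleGraph V) [DecidableRel G.Adj]
    (c : ℝ) (b : V → Bool) (v : V) : ℝ :=
  if b v = true then 1 - c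
  else if ∃ u, G.Adj v u ∧ b u = true then 1 else 0

theorem stmt_0 {V : Type*} [Fintype V] [DecidableEq V] (G : SimpleGraph V)
    [DecidableRel G.Adj] (c : ℝ) (hc0 : 0 < c) (hc1 : c < 1) (a : V → Bool) :
    (∀ (v : V) (x : Bool),
        bspgUtil G c (Function.update a v x) v ≤ bspgUtil G c a v) ↔
      ((∀ u v, G.Adj u v → ¬(a u = true ∧ a v = true)) ∧
        (∀ v, a v = false → ∃ u, G.Adj v u ∧ a u = true)) := by
  have hupd : ∀ (v : V) (x : Bool),
      (∃ u, G.Adj v u ∧ (Function.update a v x) u = true) ↔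
      (∃ u, G.Adj v u ∧ a u = true) := by
    intro v x
    constructor
    · rintro ⟨u, hadj, hu⟩
      exact ⟨u, hadj, by rwa [Function.update_of_ne (G.ne_of_adj hadj).symm] at hu⟩
    · rintro ⟨u, hadj, hu⟩
      exact ⟨u, hadj, by rwa [Function.update_of_ne (G.ne_of_adj hadj).symm]⟩
  constructor
  · intro h
    constructor
    · rintro u v hadj ⟨hu, hv⟩
      have := h v false
      rw [bspgUtil, bspgUtil] at this
      simp only [Function.update_self, hv, if_true, hupd] at this
      rw [if_neg (by simp)] at this
      rw [if_pos ⟨u, hadj.symm, hu⟩] at this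
      linarith
    · intro v hv
      by_contra hne
      have := h v true
      rw [bspgUtil, bspgUtil] at this
      simp only [Function.update_self, hv, if_true] at this
      rw [if_neg (by simp), if_neg hne] at this
      linarith
  · rintro ⟨hind, hmax⟩ v x
    rw [bspgUtil, bspgUtil]
    by_cases hv : a v = true
    · rw [if_pos hv]
      by_cases hx : x = true
      · rw [if_pos (by simp [hx])]
      · rw [if_neg (by simp [hx]), if_congr (hupd v x) rfl rfl]
        rw [if_neg ?_]
        · linarith
        · rintro ⟨u, hadj, hu⟩
          exact hind v u hadj ⟨hv, hu⟩
    · have hv' : a v = false := by simpa using hv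
      rw [if_neg hv, if_pos (hmax v hv')]
      by_cases hx : x = true
      · rw [if_pos (by simp [hx])]; linarith
      · rw [if_neg (by simp [hx]), if_congr (hupd v x) rfl rfl, if_pos (hmax v hv')]
end

section
/- In the k-coloring game on a finite graph with maximum degree Δ < k, a pure strategy profile is a Nash equilibrium if and only if it is a proper k-coloring of the graph. -/
/-- Utility in the `k`-coloring game: 1 if no neighbor has the same color. -/
def colorUtil {V : Type*} [Fintype V] {k : ℕ} (G : SimpleGraph V)
    [DecidableRel G.Adj] (b : V → Fin k) (v : V) : ℕ :=
  if ∀ u, G.Adj v u → b u ≠ b v then 1 else 0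

theorem stmt_8 {V : Type*} [Fintype V] [DecidableEq V] (G : SimpleGraph V)
    [DecidableRel G.Adj] (Δ k : ℕ) (hΔ : ∀ v, G.degree v ≤ Δ) (hk : Δ < k)
    (a : V → Fin k) :
    (∀ (v : V) (x : Fin k),
        colorUtil G (Function.update a v x) v ≤ colorUtil G a v) ↔
      (∀ u v, G.Adj u v → a u ≠ a v) := by
  constructor
  · intro h u v huv
    have hcard : ((G.neighborFinset u).image a).card < k := by
      calc ((G.neighborFinset u).image a).card
          ≤ (G.neighborFinset u).card := Finset.card_image_le
        _ ≤ Δ := by rw [G.card_neighborFinset_eq_degree]; exact hΔ u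
        _ < k := hk
    obtain ⟨x, hx⟩ : ∃ x : Fin k, x ∉ (G.neighborFinset u).image a := by
      by_contra hx
      push_neg at hx
      have := Finset.card_le_card (fun y (_ : y ∈ (Finset.univ : Finset (Fin k))) => hx y)
      simp at this; omega
    have h1 : colorUtil G (Function.update a u x) u = 1 := by
      rw [colorUtil, if_pos]
      intro w hw
      rw [Function.update_of_ne (G.ne_of_adj hw).symm, Function.update_self]
      intro heq
      exact hx (Finset.mem_image.2 ⟨w, by simpa using hw, heq⟩)
    have h2 := h u x
    rw [h1] at h2
    have h3 : colorUtil G a u = 1 :=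
      le_antisymm (by rw [colorUtil]; split <;> omega) h2
    rw [colorUtil] at h3
    split at h3
    · exact fun he => (by assumption : ∀ w, G.Adj u w → a w ≠ a u) v huv he.symm
    · omega
  · intro hp v x
    have : colorUtil G a v = 1 := by
      rw [colorUtil, if_pos]
      intro u hu
      exact hp u v hu.symm
    rw [this, colorUtil]
    split <;> omega
end

section
/- In the best-shot public goods game, starting from any strategy profile, after one fair round of sequential best responses the set of vertices playing P is an independent set, and after a second fair round it is a maximal independent set; hence fair best-response dynamics converge to a Nash equilibrium within two fair rounds. -/
/-- Best response of `v`: play P iff no neighbor plays P. -/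
def bspgBR {V : Type*} [Fintype V] (G : SimpleGraph V) [DecidableRel G.Adj]
    (b : V → Bool) (v : V) : Bool :=
  !(decide (∃ u, G.Adj v u ∧ b u = true))

/-- One fair round of sequential best responses, scheduled by the list `l`. -/
def bspgRound {V : Type*} [Fintype V] [DecidableEq V] (G : SimpleGraph V)
    [DecidableRel G.Adj] (a : V → Bool) (l : List V) : V → Bool :=
  l.foldl (fun b v => Function.update b v (bspgBR G b v)) a

section Aux

variable {V : Type*} [Fintype V] [DecidableEq V] (G : SimpleGraph V) [DecidableRel G.Adj]

lemma bspgBR_true_iff (b : V → Bool) (v : V) :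
    bspgBR G b v = true ↔ ¬ ∃ u, G.Adj v u ∧ b u = true := by
  simp [bspgBR]

lemma bspgBR_false_iff (b : V → Bool) (v : V) :
    bspgBR G b v = false ↔ ∃ u, G.Adj v u ∧ b u = true := by
  simp [bspgBR]

lemma bspgRound_cons (a : V → Bool) (x : V) (l : List V) :
    bspgRound G a (x :: l) = bspgRound G (Function.update a x (bspgBR G a x)) l := rfl

lemma bspgRound_notmem : ∀ (l : List V) (a : V → Bool) (v : V), v ∉ l →
    bspgRound G a l v = a v := by
  intro l
  induction l with
  | nil => intro a v _; rfl
  | cons x l ih =>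
      intro a v hv
      simp only [List.mem_cons, not_or] at hv
      rw [bspgRound_cons, ih _ _ hv.2, Function.update_of_ne hv.1]

/-- If `w` is not scheduled and currently plays P, any scheduled neighbor ends up at F. -/
lemma bspg_forced_false : ∀ (l : List V) (b : V → Bool) (v w : V), w ∉ l → b w = true →
    G.Adj v w → v ∈ l → bspgRound G b l v = false := by
  intro l
  induction l with
  | nil => intro _ _ _ _ _ _ h; simp at h
  | cons x l ih =>
      intro b v w hwl hbw hadj hvl
      simp only [List.mem_cons, not_or] at hwl
      rw [bspgRound_cons]
      have hb'w : Function.update b x (bspgBR G b x) w = true := by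
        rw [Function.update_of_ne hwl.1]; exact hbw
      by_cases hv : v ∈ l
      · exact ih _ v w hwl.2 hb'w hadj hv
      · have hvx : v = x := by
          rcases List.mem_cons.mp hvl with h | h
          · exact h
          · exact absurd h hv
        subst hvx
        rw [bspgRound_notmem G l _ v hv, Function.update_self, bspgBR_false_iff]
        exact ⟨w, hadj, hbw⟩

/-- The set of P-players is independent. -/
def BspgIndep (b : V → Bool) : Prop :=
  ∀ u v, G.Adj u v → ¬(b u = true ∧ b v = true)

lemma bspg_step_indep {b : V → Bool} (hb : BspgIndep G b) (x : V) :
    BspgIndep G (Function.update b x (bspgBR G b x)) := by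
  rintro u v hadj ⟨hu, hv⟩
  by_cases hux : u = x <;> by_cases hvx : v = x
  · subst hux; subst hvx; exact G.irrefl hadj
  · subst hux
    rw [Function.update_self] at hu
    rw [Function.update_of_ne hvx] at hv
    exact (bspgBR_true_iff G b _).mp hu ⟨v, hadj, hv⟩
  · subst hvx
    rw [Function.update_self] at hv
    rw [Function.update_of_ne hux] at hu
    exact (bspgBR_true_iff G b _).mp hv ⟨u, hadj.symm, hu⟩
  · rw [Function.update_of_ne hux] at hu
    rw [Function.update_of_ne hvx] at hv
    exact hb u v hadj ⟨hu, hv⟩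

lemma bspg_round_indep : ∀ (l : List V) (b : V → Bool), BspgIndep G b →
    BspgIndep G (bspgRound G b l) := by
  intro l
  induction l with
  | nil => intro b hb; exact hb
  | cons x l ih => intro b hb; rw [bspgRound_cons]; exact ih _ (bspg_step_indep G hb x)

/-- Starting from an independent profile, a P-player stays at P through the round. -/
lemma bspg_persist_true : ∀ (l : List V) (b : V → Bool) (v : V), BspgIndep G b →
    b v = true → bspgRound G b l v = true := by
  intro l
  induction l with
  | nil => intro b v _ h; exact h
  | cons x l ih =>
      intro b v hb hv
      rw [bspgRound_cons]
      refine ih _ v (bspg_step_indep G hb x) ?_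
      by_cases hvx : v = x
      · subst hvx
        rw [Function.update_self, bspgBR_true_iff]
        rintro ⟨u, hadj, hu⟩
        exact hb v u hadj ⟨hv, hu⟩
      · rw [Function.update_of_ne hvx]; exact hv

/-- Starting from an independent profile, a scheduled vertex ending at F has a P neighbor. -/
lemma bspg_round_maximal : ∀ (l : List V) (b : V → Bool) (v : V), BspgIndep G b →
    v ∈ l → bspgRound G b l v = false →
    ∃ u, G.Adj v u ∧ bspgRound G b l u = true := by
  intro l
  induction l with
  | nil => intro _ v _ h; simp at h
  | cons x l ih =>
      intro b v hb hvl hfalse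
      rw [bspgRound_cons] at hfalse ⊢
      by_cases hv : v ∈ l
      · exact ih _ v (bspg_step_indep G hb x) hv hfalse
      · have hvx : v = x := by
          rcases List.mem_cons.mp hvl with h | h
          · exact h
          · exact absurd h hv
        subst hvx
        rw [bspgRound_notmem G l _ v hv, Function.update_self, bspgBR_false_iff] at hfalse
        obtain ⟨u, hadj, hu⟩ := hfalse
        have hune : u ≠ v := fun h => G.irrefl (h ▸ hadj)
        have hb'u : Function.update b v (bspgBR G b v) u = true := by
          rw [Function.update_of_ne hune]; exact hu
        exact ⟨u, hadj, bspg_persist_true G l _ u (bspg_step_indep G hb v) hb'u⟩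

/-- After one full fair round, the P-set is independent. -/
lemma bspg_round_full_indep : ∀ (l : List V), l.Nodup → ∀ (b : V → Bool),
    ∀ u v, G.Adj u v → u ∈ l → v ∈ l →
    ¬(bspgRound G b l u = true ∧ bspgRound G b l v = true) := by
  intro l
  induction l with
  | nil => intro _ _ u v _ h; simp at h
  | cons x l ih =>
      intro hnd b u v hadj hul hvl
      obtain ⟨hxl, hnd'⟩ := List.nodup_cons.mp hnd
      rw [bspgRound_cons]
      by_cases hu : u ∈ l <;> by_cases hv : v ∈ l
      · exact ih hnd' _ u v hadj hu hv
      · -- v = x, not later rescheduled; u updated after sees v = true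
        have hvx : v = x := by
          rcases List.mem_cons.mp hvl with h | h
          · exact h
          · exact absurd h hv
        subst hvx
        rintro ⟨hut, hvt⟩
        rw [bspgRound_notmem G l _ v hv] at hvt
        have := bspg_forced_false G l _ u v hv hvt hadj hu
        simp [this] at hut
      · have hux : u = x := by
          rcases List.mem_cons.mp hul with h | h
          · exact h
          · exact absurd h hu
        subst hux
        rintro ⟨hut, hvt⟩
        rw [bspgRound_notmem G l _ u hu] at hut
        have := bspg_forced_false G l _ v u hu hut hadj.symm hv
        simp [this] at hvt
      · have hux : u = x := by
          rcases List.mem_cons.mp hul with h | h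
          · exact h
          · exact absurd h hu
        have hvx : v = x := by
          rcases List.mem_cons.mp hvl with h | h
          · exact h
          · exact absurd h hv
        subst hux; subst hvx
        exact absurd hadj (G.irrefl)

end Aux

theorem stmt_12 {V : Type*} [Fintype V] [DecidableEq V] (G : SimpleGraph V)
    [DecidableRel G.Adj] (c : ℝ) (hc0 : 0 < c) (hc1 : c < 1)
    (a : V → Bool) (l₁ l₂ : List V)
    (h₁ : l₁.Nodup) (h₁' : ∀ v, v ∈ l₁) (h₂ : l₂.Nodup) (h₂' : ∀ v, v ∈ l₂) :
    (∀ u v, G.Adj u v →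
        ¬(bspgRound G a l₁ u = true ∧ bspgRound G a l₁ v = true)) ∧
    (∀ u v, G.Adj u v →
        ¬(bspgRound G (bspgRound G a l₁) l₂ u = true ∧
          bspgRound G (bspgRound G a l₁) l₂ v = true)) ∧
    (∀ v, bspgRound G (bspgRound G a l₁) l₂ v = false →
        ∃ u, G.Adj v u ∧ bspgRound G (bspgRound G a l₁) l₂ u = true) ∧
    (∀ (v : V) (x : Bool),
        bspgUtil G c (Function.update (bspgRound G (bspgRound G a l₁) l₂) v x) v ≤
          bspgUtil G c (bspgRound G (bspgRound G a l₁) l₂) v) := by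
  have hind1 : BspgIndep G (bspgRound G a l₁) := fun u v hadj =>
    bspg_round_full_indep G l₁ h₁ a u v hadj (h₁' u) (h₁' v)
  have hind2 : BspgIndep G (bspgRound G (bspgRound G a l₁) l₂) :=
    bspg_round_indep G l₂ _ hind1
  have hmax : ∀ v, bspgRound G (bspgRound G a l₁) l₂ v = false →
      ∃ u, G.Adj v u ∧ bspgRound G (bspgRound G a l₁) l₂ u = true :=
    fun v hv => bspg_round_maximal G l₂ _ v hind1 (h₂' v) hv
  refine ⟨hind1, hind2, hmax, ?_⟩
  set b2 := bspgRound G (bspgRound G a l₁) l₂ with hb2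
  intro v x
  by_cases hv : b2 v = true
  · -- v plays P; no neighbor plays P, so deviating to F gives 0 ≤ 1 - c
    have hno : ¬ ∃ u, G.Adj v u ∧ b2 u = true := by
      rintro ⟨u, hadj, hu⟩; exact hind2 v u hadj ⟨hv, hu⟩
    have hno' : ¬ ∃ u, G.Adj v u ∧ Function.update b2 v x u = true := by
      rintro ⟨u, hadj, hu⟩
      rw [Function.update_of_ne (G.ne_of_adj hadj).symm] at hu
      exact hno ⟨u, hadj, hu⟩
    by_cases hx : x = true
    · simp [bspgUtil, hv, hx]
    · have hx' : x = false := by simpa using hx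
      rw [hx'] at hno'
      simp only [bspgUtil, Function.update_self, hv, hx', if_true]
      rw [if_neg (by simp), if_neg hno']
      linarith
  · -- v plays F; it has a P neighbor, so its utility is 1, the maximum possible
    have hv' : b2 v = false := by simpa using hv
    obtain ⟨u, hadj, hu⟩ := hmax v hv'
    have hex : ∃ u, G.Adj v u ∧ b2 u = true := ⟨u, hadj, hu⟩
    have hrhs : bspgUtil G c b2 v = 1 := by
      simp only [bspgUtil, hv', if_pos hex]
      simp
    rw [hrhs]
    by_cases hx : x = true
    · simp only [bspgUtil, Function.update_self, hx, if_true]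
      linarith
    · have hx' : x = false := by simpa using hx
      simp only [bspgUtil, Function.update_self, hx']
      rw [if_neg (by simp)]
      split <;> norm_num
end

section
/- For any finite d-regular graph G, the maximum cut of G has size at most (1/2 + |λ_n|/(2d))·|E|, where λ_n is the smallest eigenvalue of the adjacency matrix of G. -/
/-!
Let `x` be the `±1` vector of the cut `(S, Sᶜ)`. Since `x` has unit entries, its degree form is
`∑ deg = 2|E|`, while its Laplacian form `∑_{uv ∈ E} (x u - x v)²` is `4` times the cut, so
`xᵀ A x = 2|E| - 4·cut`. On the other hand `A ≥ λ_n` in the Loewner order, so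
`xᵀ A x ≥ λ_n ‖x‖² = λ_n |V|`, and `d |V| = 2|E|` for a `d`-regular graph.
-/

/-- The edges of `G` crossing the cut `(S, Sᶜ)`. -/
def cutOf {V : Type*} [Fintype V] [DecidableEq V] (G : SimpleGraph V)
    [DecidableRel G.Adj] (S : Finset V) : Finset (Sym2 V) :=
  G.edgeFinset.filter (fun e => ∃ u v, e = s(u, v) ∧ u ∈ S ∧ v ∉ S)

open Finset Matrix
open scoped MatrixOrder ComplexOrder

theorem Matrix.IsHermitian.mul_dotProduct_le_of_le_eigenvalues {𝕜 n : Type*} [RCLike 𝕜]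
    [Fintype n] [DecidableEq n] {A : Matrix n n 𝕜} (hA : A.IsHermitian) {μ : ℝ}
    (hμ : ∀ i, μ ≤ hA.eigenvalues i) (x : n → 𝕜) :
    (μ : 𝕜) * (star x ⬝ᵥ x) ≤ star x ⬝ᵥ A *ᵥ x := by
  have hle : algebraMap ℝ (Matrix n n 𝕜) μ ≤ A := by
    rw [algebraMap_le_iff_le_spectrum hA.isSelfAdjoint, hA.spectrum_real_eq_range_eigenvalues]
    rintro _ ⟨i, rfl⟩
    exact hμ i
  have hform := (le_iff.mp hle).dotProduct_mulVec_nonneg x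
  rw [sub_mulVec, dotProduct_sub, sub_nonneg] at hform
  simpa only [Algebra.algebraMap_eq_smul_one, Algebra.smul_mul_assoc, one_mul, smul_mulVec,
    one_mulVec, dotProduct_smul] using hform

theorem SimpleGraph.IsRegularOfDegree.card_mul_eq_two_mul_card_edgeFinset {V : Type*} [Fintype V]
    {G : SimpleGraph V} [DecidableRel G.Adj] {d : ℕ} (hG : G.IsRegularOfDegree d) :
    Fintype.card V * d = 2 * #G.edgeFinset := by
  rw [← G.sum_degrees_eq_twice_card_edges, sum_congr rfl fun v _ ↦ hG v, sum_const, card_univ,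
    smul_eq_mul]

section CutVector

variable {V : Type*} (S : Finset V) [DecidableEq V]

def cutVector : V → ℝ := fun v ↦ if v ∈ S then 1 else -1

variable {S} in
theorem cutVector_mul_self (v : V) : cutVector S v * cutVector S v = 1 := by
  unfold cutVector; split_ifs <;> norm_num

theorem cutVector_dotProduct_self [Fintype V] : cutVector S ⬝ᵥ cutVector S = Fintype.card V := by
  simp [dotProduct, cutVector_mul_self]

end CutVector

namespace SimpleGraph

variable {V : Type*} [DecidableEq V] (G : SimpleGraph V) [DecidableRel G.Adj] (S : Finset V)

theorem ite_adj_cutVector_sub_sq (u v : V) :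
    (if G.Adj u v then (cutVector S u - cutVector S v) ^ 2 else 0) =
      4 * (if G.Adj u v ∧ u ∈ S ∧ v ∉ S then 1 else 0) +
        4 * (if G.Adj v u ∧ v ∈ S ∧ u ∉ S then 1 else 0) := by
  unfold cutVector
  by_cases huv : G.Adj u v <;> by_cases hu : u ∈ S <;> by_cases hv : v ∈ S <;>
    norm_num [huv, G.adj_comm v u, hu, hv]

variable [Fintype V]

theorem cutVector_dotProduct_degMatrix_mulVec :
    cutVector S ⬝ᵥ G.degMatrix ℝ *ᵥ cutVector S = 2 * #G.edgeFinset := by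
  simp_rw [dotProduct_mulVec_degMatrix, mul_assoc, cutVector_mul_self, mul_one]
  exact_mod_cast G.sum_degrees_eq_twice_card_edges

theorem card_cutOf_eq_card_filter_adj :
    #(cutOf G S) = #{p : V × V | G.Adj p.1 p.2 ∧ p.1 ∈ S ∧ p.2 ∉ S} := by
  symm
  apply card_bij (fun p _ ↦ s(p.1, p.2))
  · rintro ⟨u, v⟩ hp
    simp only [mem_filter, mem_univ, true_and] at hp
    simp only [cutOf, mem_filter, mem_edgeFinset, mem_edgeSet]
    exact ⟨hp.1, u, v, rfl, hp.2⟩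
  · rintro ⟨u, v⟩ hp ⟨u', v'⟩ hp' h
    simp only [mem_filter, mem_univ, true_and] at hp hp'
    rcases Sym2.eq_iff.mp h with ⟨rfl, rfl⟩ | ⟨rfl, rfl⟩
    · rfl
    · exact absurd hp.2.1 hp'.2.2
  · intro e he
    simp only [cutOf, mem_filter, mem_edgeFinset] at he
    obtain ⟨hadj, u, v, rfl, hu, hv⟩ := he
    exact ⟨(u, v), by simpa using ⟨hadj, hu, hv⟩, rfl⟩

theorem sum_sum_ite_adj_mem_not_mem :
    ∑ u, ∑ v, (if G.Adj u v ∧ u ∈ S ∧ v ∉ S then 1 else 0 : ℝ) = #(cutOf G S) := by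
  rw [← Fintype.sum_prod_type', sum_boole, card_cutOf_eq_card_filter_adj]

theorem cutVector_dotProduct_lapMatrix_mulVec :
    cutVector S ⬝ᵥ G.lapMatrix ℝ *ᵥ cutVector S = 4 * #(cutOf G S) := by
  rw [← toLinearMap₂'_apply', lapMatrix_toLinearMap₂']
  simp_rw [ite_adj_cutVector_sub_sq, sum_add_distrib, ← mul_sum]
  rw [sum_comm (f := fun u v ↦ (if G.Adj v u ∧ v ∈ S ∧ u ∉ S then 1 else 0 : ℝ)),
    sum_sum_ite_adj_mem_not_mem]
  ring

theorem cutVector_dotProduct_adjMatrix_mulVec :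
    cutVector S ⬝ᵥ G.adjMatrix ℝ *ᵥ cutVector S = 2 * #G.edgeFinset - 4 * #(cutOf G S) := by
  rw [← cutVector_dotProduct_degMatrix_mulVec, ← cutVector_dotProduct_lapMatrix_mulVec, lapMatrix,
    sub_mulVec, dotProduct_sub, sub_sub_cancel]

end SimpleGraph

theorem stmt_14_general {V : Type*} [Fintype V] [DecidableEq V] (G : SimpleGraph V)
    [DecidableRel G.Adj] (d : ℕ) (hd : 0 < d) (hreg : ∀ v, G.degree v = d)
    (hA : (G.adjMatrix ℝ).IsHermitian) (μ : ℝ)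
    (hμmin : ∀ i, μ ≤ hA.eigenvalues i)
    (S : Finset V) :
    ((cutOf G S).card : ℝ) ≤ (1 / 2 + |μ| / (2 * d)) * G.edgeFinset.card := by
  have hrayleigh := hA.mul_dotProduct_le_of_le_eigenvalues hμmin (cutVector S)
  rw [star_trivial, RCLike.ofReal_real_eq_id, id, cutVector_dotProduct_self,
    G.cutVector_dotProduct_adjMatrix_mulVec] at hrayleigh
  have hcount : (Fintype.card V * d : ℝ) = 2 * #G.edgeFinset := by
    exact_mod_cast SimpleGraph.IsRegularOfDegree.card_mul_eq_two_mul_card_edgeFinset hreg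
  have hd' : (0 : ℝ) < d := by exact_mod_cast hd
  calc (#(cutOf G S) : ℝ) ≤ (2 * #G.edgeFinset + |μ| * Fintype.card V) / 4 := by
        linarith [mul_le_mul_of_nonneg_right (neg_abs_le μ) (Fintype.card V).cast_nonneg]
    _ = (1 / 2 + |μ| / (2 * d)) * #G.edgeFinset := by
        field_simp
        linear_combination 2 * |μ| * hcount

theorem stmt_14 {V : Type*} [Fintype V] [DecidableEq V] (G : SimpleGraph V)
    [DecidableRel G.Adj] (d : ℕ) (hd : 0 < d) (hreg : ∀ v, G.degree v = d)
    (hA : (G.adjMatrix ℝ).IsHermitian) (μ : ℝ)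
    (hμmem : ∃ i, μ = hA.eigenvalues i)
    (hμmin : ∀ i, μ ≤ hA.eigenvalues i)
    (S : Finset V) :
    ((cutOf G S).card : ℝ) ≤ (1 / 2 + |μ| / (2 * d)) * G.edgeFinset.card :=
  stmt_14_general G d hd hreg hA μ hμmin S
end

section
/- If D is a perfect dominating set of a finite graph G, then the two copies of D in the bipartite double cover of G form a perfect dominating set of the bipartite double cover. -/
/-- The bipartite double cover of a graph. -/
def doubleCover {V : Type*} (G : SimpleGraph V) : SimpleGraph (V × Bool) where
  Adj p q := G.Adj p.1 q.1 ∧ p.2 ≠ q.2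
  symm := by
    constructor
    rintro p q ⟨h1, h2⟩
    exact ⟨h1.symm, Ne.symm h2⟩
  loopless := by
    constructor
    rintro p ⟨h1, h2⟩
    exact h2 rfl

/-- `D` is a perfect dominating set: every vertex outside `D` has exactly one
neighbor in `D`. -/
def perfectDominating {V : Type*} (G : SimpleGraph V) (D : Set V) : Prop :=
  ∀ v, v ∉ D → {u ∈ D | G.Adj v u}.ncard = 1

section DoubleCover

variable {V : Type*} (G : SimpleGraph V) (D : Set V)

@[simp]
theorem doubleCover_adj {p q : V × Bool} :
    (doubleCover G).Adj p q ↔ G.Adj p.1 q.1 ∧ p.2 ≠ q.2 :=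
  Iff.rfl

theorem doubleCover_neighbors_in_prod_univ (v : V) (b : Bool) :
    {p ∈ D ×ˢ (Set.univ : Set Bool) | (doubleCover G).Adj (v, b) p} =
      (·, !b) '' {u ∈ D | G.Adj v u} := by
  ext ⟨u, c⟩
  simp only [Set.mem_ofPred_eq, Set.mem_prod, Set.mem_univ, and_true, doubleCover_adj,
    Set.mem_image, Prod.mk.injEq]
  constructor
  · rintro ⟨hu, hadj, hne⟩
    exact ⟨u, ⟨hu, hadj⟩, rfl, (Bool.eq_not_of_ne hne.symm).symm⟩
  · rintro ⟨w, ⟨hw, hadj⟩, rfl, rfl⟩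
    exact ⟨hw, hadj, Bool.self_ne_not b⟩

theorem ncard_doubleCover_neighbors_in_prod_univ (v : V) (b : Bool) :
    {p ∈ D ×ˢ (Set.univ : Set Bool) | (doubleCover G).Adj (v, b) p}.ncard =
      {u ∈ D | G.Adj v u}.ncard := by
  rw [doubleCover_neighbors_in_prod_univ,
    Set.ncard_image_of_injective _ fun _ _ h => (Prod.mk.inj h).1]

end DoubleCover

theorem stmt_16_general {V : Type*} (G : SimpleGraph V)
    (D : Set V) (hD : perfectDominating G D) :
    perfectDominating (doubleCover G) (D ×ˢ (Set.univ : Set Bool)) := by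
  rintro ⟨v, b⟩ hv
  rw [ncard_doubleCover_neighbors_in_prod_univ]
  exact hD v fun hvD => hv ⟨hvD, Set.mem_univ b⟩

theorem stmt_16 {V : Type*} [Fintype V] [DecidableEq V] (G : SimpleGraph V)
    (D : Set V) (hD : perfectDominating G D) :
    perfectDominating (doubleCover G) (D ×ˢ (Set.univ : Set Bool)) :=
  stmt_16_general G D hD
end
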